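/- For every integer n ≥ 2 and every real z, G_n(z) = z + (z−1)·Σ_{k=1}^{n−1} w_{k,n}·G_k(z), where the weights are w_{k,n} = 2k(k+1)·Σ_{i=k+1}^{n} 1/(i²(i²−1)). -/
import Mathlib


open Finset

/-- `p n k` is the probability `p_k^{(n)} = P(f_0(T_n) = k)` that the random convex chain
`T_n` has exactly `k` vertices (besides the two corners), given by Buchta's formula:
`p_k^{(n)} = 2^k · Σ_{i_1+⋯+i_k = n, i_j ≥ 1} Π_{j=1}^{k} i_j / (s_j (s_j + 1))`,
where `s_j = i_1 + ⋯ + i_j`.  In particular `p 0 0 = 1` and `p n 0 = 0` for `n ≥ 1`,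
and `p n k = 0` for `k > n`. -/
noncomputable def p (n k : ℕ) : ℝ :=
  2 ^ k *
    ∑ i ∈ (Fintype.piFinset fun _ : Fin k => Finset.Icc 1 n).filter
        (fun i => ∑ j, i j = n),
      ∏ j : Fin k,
        (i j : ℝ) /
          (((∑ l ∈ Finset.univ.filter (fun l => l ≤ j), i l : ℕ) : ℝ) *
            (((∑ l ∈ Finset.univ.filter (fun l => l ≤ j), i l : ℕ) : ℝ) + 1))

def AA (n k : ℕ) : Finset (Fin k → ℕ) :=
  (Fintype.piFinset fun _ : Fin k => Finset.Icc 1 n).filter (fun f => ∑ j, f j = n)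

noncomputable def BB (k : ℕ) (f : Fin k → ℕ) : ℝ :=
  ∏ j : Fin k,
    (f j : ℝ) /
      (((∑ l ∈ Finset.univ.filter (fun l => l ≤ j), f l : ℕ) : ℝ) *
        (((∑ l ∈ Finset.univ.filter (fun l => l ≤ j), f l : ℕ) : ℝ) + 1))

lemma p_eq (n k : ℕ) : p n k = 2 ^ k * ∑ f ∈ AA n k, BB k f := rfl

lemma mem_AA {n k : ℕ} {f : Fin k → ℕ} :
    f ∈ AA n k ↔ (∀ j, 1 ≤ f j ∧ f j ≤ n) ∧ ∑ j, f j = n := by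
  simp [AA, Fintype.mem_piFinset, Finset.mem_Icc, Finset.mem_filter, forall_and]

lemma partial_sum_castSucc (k : ℕ) (f : Fin (k+1) → ℕ) (j : Fin k) :
    ∑ l ∈ Finset.univ.filter (fun l => l ≤ Fin.castSucc j), f l
      = ∑ l ∈ Finset.univ.filter (fun l => l ≤ j), Fin.init f l := by
  rw [Finset.sum_filter, Finset.sum_filter, Fin.sum_univ_castSucc]
  have h1 : ¬ (Fin.last k ≤ Fin.castSucc j) := not_le.2 (Fin.castSucc_lt_last j)
  simp [h1, Fin.castSucc_le_castSucc_iff, Fin.init]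

lemma partial_sum_last (k : ℕ) (f : Fin (k+1) → ℕ) :
    ∑ l ∈ Finset.univ.filter (fun l => l ≤ Fin.last k), f l = ∑ l, f l := by
  congr 1
  exact Finset.filter_true_of_mem fun x _ => Fin.le_last x

lemma sum_init (k : ℕ) (f : Fin (k+1) → ℕ) :
    ∑ j, f j = (∑ j, Fin.init f j) + f (Fin.last k) := by
  rw [Fin.sum_univ_castSucc]; rfl

lemma BB_snoc (n k : ℕ) (f : Fin (k+1) → ℕ) (hf : ∑ j, f j = n) :
    BB (k+1) f = BB k (Fin.init f) * ((f (Fin.last k) : ℝ) / ((n:ℝ) * ((n:ℝ)+1))) := by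
  rw [BB, BB, Fin.prod_univ_castSucc]
  congr 1
  · exact Finset.prod_congr rfl fun j _ => by rw [partial_sum_castSucc]; rfl
  · rw [partial_sum_last, hf]

lemma sum_AA_succ (n k : ℕ) (hn : 1 ≤ n) :
    ∑ f ∈ AA n (k+1), BB (k+1) f
      = ∑ m ∈ Finset.range n, ∑ g ∈ AA m k,
          (((n:ℝ) - (m:ℝ)) / ((n:ℝ) * ((n:ℝ)+1))) * BB k g := by
  have hsig := Finset.sum_sigma (Finset.range n) (fun m => AA m k)
    (fun q : (_ : ℕ) × (Fin k → ℕ) => (((n:ℝ) - (q.1:ℝ)) / ((n:ℝ) * ((n:ℝ)+1))) * BB k q.2)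
  rw [← hsig]
  apply Finset.sum_nbij'
    (i := fun f => (⟨n - f (Fin.last k), Fin.init f⟩ : (_ : ℕ) × (Fin k → ℕ)))
    (j := fun q => Fin.snoc q.2 (n - q.1))
  · -- hi
    intro f hf
    obtain ⟨hmem, hsum⟩ := mem_AA.1 hf
    have hinit : (∑ j, Fin.init f j) + f (Fin.last k) = n := by rw [← sum_init, hsum]
    have hlast1 : 1 ≤ f (Fin.last k) := (hmem _).1
    have hlastn : f (Fin.last k) ≤ n := (hmem _).2
    rw [Finset.mem_sigma]
    dsimp only
    constructor
    · rw [Finset.mem_range]; omega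
    · rw [mem_AA]
      refine ⟨fun j => ⟨(hmem _).1, ?_⟩, by omega⟩
      have := Finset.single_le_sum (f := Fin.init f)
        (fun j _ => Nat.zero_le _) (Finset.mem_univ j)
      omega
  · -- hj
    rintro ⟨m, g⟩ hq
    rw [Finset.mem_sigma] at hq
    obtain ⟨hm, hg⟩ := hq
    rw [Finset.mem_range] at hm
    obtain ⟨hmem, hsum⟩ := mem_AA.1 hg
    rw [mem_AA]
    constructor
    · intro j
      refine Fin.lastCases ?_ ?_ j
      · rw [Fin.snoc_last]; omega
      · intro i
        rw [Fin.snoc_castSucc]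
        exact ⟨(hmem i).1, le_trans (hmem i).2 (by omega)⟩
    · rw [sum_init, Fin.init_snoc, Fin.snoc_last, hsum]; omega
  · -- left_inv
    intro f hf
    obtain ⟨hmem, hsum⟩ := mem_AA.1 hf
    have hinit : (∑ j, Fin.init f j) + f (Fin.last k) = n := by rw [← sum_init, hsum]
    have hlastn : f (Fin.last k) ≤ n := (hmem _).2
    simp only
    rw [show n - (n - f (Fin.last k)) = f (Fin.last k) by omega, Fin.snoc_init_self]
  · -- right_inv
    rintro ⟨m, g⟩ hq
    rw [Finset.mem_sigma, Finset.mem_range] at hq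
    dsimp only at hq ⊢
    simp only [Fin.snoc_last, Fin.init_snoc]
    rw [show n - (n - m) = m by omega]
  · -- value
    intro f hf
    obtain ⟨hmem, hsum⟩ := mem_AA.1 hf
    have hinit : (∑ j, Fin.init f j) + f (Fin.last k) = n := by rw [← sum_init, hsum]
    have hlastn : f (Fin.last k) ≤ n := (hmem _).2
    rw [BB_snoc n k f hsum]
    have : ((n:ℝ) - ((n - f (Fin.last k) : ℕ) : ℝ)) = (f (Fin.last k) : ℝ) := by
      have : (n - f (Fin.last k)) + f (Fin.last k) = n := by omega
      push_cast [Nat.cast_sub hlastn]; ring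
    rw [this]
    ring

/-- `G n z = Σ_{k=1}^n p_k^{(n)} z^k` is the probability generating function of the
vertex number `f_0(T_n)`; by convention `G 0 z = 1` (note `p 0 0 = 1` and `p n 0 = 0`
for `n ≥ 1`, so the `k = 0` term is harmless). -/
noncomputable def G (n : ℕ) (z : ℝ) : ℝ :=
  ∑ k ∈ Finset.range (n + 1), p n k * z ^ k


lemma p_zero_zero : p 0 0 = 1 := by simp [p]

lemma p_pos_zero (n : ℕ) (hn : 1 ≤ n) : p n 0 = 0 := by simp [p]; omega

lemma p_eq_zero_of_lt (n k : ℕ) (h : n < k) : p n k = 0 := by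
  rw [p, Finset.filter_eq_empty_iff.2, Finset.sum_empty, mul_zero]
  intro f hf
  simp only [Fintype.mem_piFinset, Finset.mem_Icc] at hf
  intro hs
  have : k ≤ ∑ j, f j := by
    calc k = ∑ _j : Fin k, 1 := by simp
    _ ≤ _ := Finset.sum_le_sum fun j _ => (hf j).1
  omega

lemma p_rec (n k : ℕ) (hn : 1 ≤ n) :
    p n (k+1) = 2 / ((n:ℝ) * ((n:ℝ)+1)) * ∑ m ∈ Finset.range n, ((n:ℝ) - (m:ℝ)) * p m k := by
  have h := sum_AA_succ n k hn
  rw [p_eq, h]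
  simp only [p_eq, Finset.mul_sum]
  apply Finset.sum_congr rfl
  intro m _
  apply Finset.sum_congr rfl
  intro g _
  ring

lemma G_zero (z : ℝ) : G 0 z = 1 := by simp [G, p_zero_zero]

lemma G_rec (n : ℕ) (z : ℝ) :
    (n:ℝ) * ((n:ℝ)+1) * G n z = 2 * z * ∑ m ∈ Finset.range n, ((n:ℝ) - (m:ℝ)) * G m z := by
  rcases Nat.eq_zero_or_pos n with rfl | hn
  · simp
  have hG : ∀ m ∈ Finset.range n, G m z = ∑ k ∈ Finset.range n, p m k * z ^ k := by
    intro m hm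
    rw [Finset.mem_range] at hm
    rw [G]
    apply Finset.sum_subset
    · exact Finset.range_subset_range.2 (by omega)
    · intro k _ hk
      rw [Finset.mem_range, not_lt] at hk
      rw [p_eq_zero_of_lt m k (by omega), zero_mul]
  have hn0 : (n:ℝ) * ((n:ℝ)+1) ≠ 0 := by
    have : (1:ℝ) ≤ (n:ℝ) := by exact_mod_cast hn
    positivity
  rw [G, Finset.sum_range_succ', p_pos_zero n hn, zero_mul, add_zero]
  have : ∑ k ∈ Finset.range n, p n (k+1) * z ^ (k+1)
      = ∑ k ∈ Finset.range n, (2 / ((n:ℝ) * ((n:ℝ)+1)) *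
          ∑ m ∈ Finset.range n, ((n:ℝ) - (m:ℝ)) * p m k) * z ^ (k+1) := by
    exact Finset.sum_congr rfl fun k _ => by rw [p_rec n k hn]
  rw [this]
  have key : (n:ℝ)*((n:ℝ)+1) * ∑ k ∈ Finset.range n, (2 / ((n:ℝ)*((n:ℝ)+1)) *
        ∑ m ∈ Finset.range n, ((n:ℝ)-(m:ℝ)) * p m k) * z^(k+1)
      = ∑ k ∈ Finset.range n, ∑ m ∈ Finset.range n,
          2*z*(((n:ℝ)-(m:ℝ)) * (p m k * z^k)) := by
    rw [Finset.mul_sum]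
    apply Finset.sum_congr rfl
    intro k _
    rw [Finset.mul_sum, Finset.sum_mul, Finset.mul_sum]
    apply Finset.sum_congr rfl
    intro m _
    field_simp
    ring
  rw [key, Finset.sum_comm, Finset.mul_sum]
  apply Finset.sum_congr rfl
  intro m hm
  rw [hG m hm, Finset.mul_sum, Finset.mul_sum]

noncomputable def Sf (z : ℝ) (n : ℕ) : ℝ := ∑ m ∈ Finset.range n, ((n:ℝ) - (m:ℝ)) * G m z

lemma G_rec' (n : ℕ) (z : ℝ) :
    (n:ℝ) * ((n:ℝ)+1) * G n z = 2 * z * Sf z n := by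
  rw [Sf]; exact G_rec n z

lemma Sf_succ (z : ℝ) (n : ℕ) :
    Sf z (n+1) = Sf z n + ∑ m ∈ Finset.range (n+1), G m z := by
  rw [Sf, Sf]
  have h : ∀ m ∈ Finset.range (n+1), (((n+1:ℕ):ℝ) - (m:ℝ)) * G m z
      = ((n:ℝ)-(m:ℝ))*G m z + G m z := by
    intro m _; push_cast; ring
  rw [Finset.sum_congr rfl h, Finset.sum_add_distrib]
  congr 1
  rw [Finset.sum_range_succ]
  simp

lemma three_term (m : ℕ) (z : ℝ) :
    ((m:ℝ)+2)*((m:ℝ)+3)*G (m+2) z - 2*((m:ℝ)+1)*((m:ℝ)+2)*G (m+1) z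
        + (m:ℝ)*((m:ℝ)+1)*G m z = 2*z*G (m+1) z := by
  have h2 := G_rec' (m+2) z
  have h1 := G_rec' (m+1) z
  have h0 := G_rec' m z
  have d2 := Sf_succ z (m+1)
  have d1 := Sf_succ z m
  have dA : ∑ x ∈ Finset.range (m+2), G x z
      = (∑ x ∈ Finset.range (m+1), G x z) + G (m+1) z := Finset.sum_range_succ _ _
  push_cast at h2 h1 h0
  linear_combination h2 - 2*h1 + h0 + 2*z*d2 - 2*z*d1 + 2*z*dA

/-- The weights `w_{k,n} = 2k(k+1) Σ_{i=k+1}^{n} 1/(i²(i²−1))`. -/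
noncomputable def w (k n : ℕ) : ℝ :=
  2 * (k : ℝ) * ((k : ℝ) + 1) *
    ∑ i ∈ Finset.Icc (k + 1) n, 1 / ((i : ℝ) ^ 2 * ((i : ℝ) ^ 2 - 1))


lemma w_self (k : ℕ) : w k k = 0 := by simp [w]

lemma w_succ (k n : ℕ) (h : k ≤ n) : w k (n+1)
    = w k n + 2*(k:ℝ)*((k:ℝ)+1) * (1 / (((n:ℝ)+1)^2*(((n:ℝ)+1)^2-1))) := by
  rw [w, w, Finset.sum_Icc_succ_top (by omega : k+1 ≤ n+1)]
  push_cast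
  ring

lemma w_top (m : ℕ) : (((m:ℝ)+1)+2)*(((m:ℝ)+1)+3) * w (m+1+1) (m+1+2) = 2 := by
  rw [w_succ (m+1+1) (m+1+1) le_rfl, w_self]
  have h1 : ((m:ℝ)+3) ≠ 0 := by positivity
  have h2 : ((m:ℝ)+4) ≠ 0 := by positivity
  have h3 : ((m:ℝ)+2) ≠ 0 := by positivity
  have h4 : (((m:ℝ)+1+1)+1)^2 - 1 ≠ 0 := by nlinarith [Nat.cast_nonneg (α := ℝ) m]
  push_cast at h4 ⊢
  field_simp
  ring

lemma w_rec (k mm : ℕ) (hk : k ≤ mm + 1) :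
    ((mm:ℝ)+3)*((mm:ℝ)+4) * w k (mm+3)
      = (2 + 2*((mm:ℝ)+2)*((mm:ℝ)+3)) * w k (mm+2) - ((mm:ℝ)+1)*((mm:ℝ)+2) * w k (mm+1) := by
  rw [w_succ k (mm+2) (by omega), w_succ k (mm+1) (by omega)]
  have hm : (0:ℝ) ≤ (mm:ℝ) := Nat.cast_nonneg mm
  have h1 : ((mm:ℝ)+2) ≠ 0 := by positivity
  have h2 : ((mm:ℝ)+3) ≠ 0 := by positivity
  have h3 : (((mm:ℝ)+1)+1)^2 - 1 ≠ 0 := by nlinarith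
  have h4 : (((mm:ℝ)+2)+1)^2 - 1 ≠ 0 := by nlinarith
  push_cast at h3 h4 ⊢
  field_simp
  ring

lemma G_one (z : ℝ) : G 1 z = z := by
  have h := G_rec' 1 z
  rw [Sf] at h
  simp [G_zero] at h
  linarith

lemma main_ind (z : ℝ) (m : ℕ) :
    (G (m+1) z = z + (z-1) * ∑ k ∈ Finset.Icc 1 m, w k (m+1) * G k z)
    ∧ (G (m+2) z = z + (z-1) * ∑ k ∈ Finset.Icc 1 (m+1), w k (m+2) * G k z) := by
  induction m with
  | zero =>
    constructor
    · simp [G_one]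
    · have h3 := three_term 0 z
      rw [G_one, G_zero] at h3
      have hw : w 1 2 = 1/3 := by
        rw [w, Finset.Icc_self, Finset.sum_singleton]
        norm_num
      rw [show Finset.Icc 1 1 = {1} from rfl, Finset.sum_singleton, hw, G_one]
      push_cast at h3
      nlinarith [h3]
    | succ mm ih =>
    refine ⟨ih.2, ?_⟩
    have hX := ih.2
    have hY' := ih.1
    have hYY : ∑ k ∈ Finset.Icc 1 (mm+1), w k (mm+1) * G k z
        = ∑ k ∈ Finset.Icc 1 mm, w k (mm+1) * G k z := by
      rw [Finset.sum_Icc_succ_top (by omega : 1 ≤ mm+1), w_self, zero_mul, add_zero]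
    have hY : G (mm+1) z = z + (z-1) * ∑ k ∈ Finset.Icc 1 (mm+1), w k (mm+1) * G k z := by
      rw [hYY]; exact hY'
    have hsum : ((mm:ℝ)+3)*((mm:ℝ)+4) * ∑ k ∈ Finset.Icc 1 (mm+1), w k (mm+3) * G k z
        = (2 + 2*((mm:ℝ)+2)*((mm:ℝ)+3)) * (∑ k ∈ Finset.Icc 1 (mm+1), w k (mm+2) * G k z)
          - ((mm:ℝ)+1)*((mm:ℝ)+2) * (∑ k ∈ Finset.Icc 1 (mm+1), w k (mm+1) * G k z) := by
      rw [Finset.mul_sum, Finset.mul_sum, Finset.mul_sum, ← Finset.sum_sub_distrib]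
      apply Finset.sum_congr rfl
      intro k hk
      rw [Finset.mem_Icc] at hk
      linear_combination (G k z) * w_rec k mm hk.2
    have htop := w_top mm
    have h3 := three_term (mm+1) z
    push_cast at h3 htop
    rw [show mm+1+2 = mm+3 from rfl] at h3
    rw [show mm+1+1 = mm+2 from rfl] at h3 htop
    rw [show mm+1+2 = mm+3 from rfl] at htop
    have hne : ((mm:ℝ)+3)*((mm:ℝ)+4) ≠ 0 := by positivity
    apply mul_left_cancel₀ hne
    rw [Finset.sum_Icc_succ_top (by omega : 1 ≤ mm+2)]
    linear_combination h3 - (z-1)*hsum - (z-1)*(G (mm+2) z)*htop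
      + (2*((mm:ℝ)+2)*((mm:ℝ)+3)+2)*hX - ((mm:ℝ)+1)*((mm:ℝ)+2)*hY

/-- Theorem 2: for every `n ≥ 2` and every real `z`,
`G_n(z) = z + (z − 1) Σ_{k=1}^{n−1} w_{k,n} G_k(z)`. -/
theorem G_weighted_representation (n : ℕ) (hn : 2 ≤ n) (z : ℝ) :
    G n z = z + (z - 1) * ∑ k ∈ Finset.Icc 1 (n - 1), w k n * G k z := by

  obtain ⟨m, rfl⟩ : ∃ m, n = m + 2 := ⟨n - 2, by omega⟩
  exact (main_ind z m).2
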